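/- arXiv:0805.1077 — 3 statements merged into one kernel-verified Lean document; each statement's English description precedes it below -/
import Mathlib

section
/- Let A be an admissible pseudo-Hermitian n×n matrix with eigenvalues λ_p ≥ … ≥ λ_1 > μ_1 ≥ … ≥ μ_q. Then λ_1 = min_{x ∈ ℂⁿ₊} R_A(x); precisely: for every x ∈ ℂⁿ₊ one has R_A(x) ≥ λ_1, and there exists x ∈ ℂⁿ₊ with R_A(x) = λ_1. -/
/-!
Writing `x = U y`, the `J`-unitarity of `U` turns `⟨x, x⟩` and `⟨A x, x⟩` into `⟨y, y⟩` and
`⟨Λ y, y⟩`, so `R_A(U y) = R_Λ(y)`. Then `⟨Λ y, y⟩ - λ₁ ⟨y, y⟩` is a sum of terms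
`(λ_i - λ₁) |y_i|²` over the first `p` coordinates and `(λ₁ - μ_j) |y_{p+j}|²` over the last `q`,
all nonnegative, with equality at the basis vector carrying `λ₁`.
-/

open Matrix

/-- The signature matrix `J = diag(1,…,1,−1,…,−1)` with `p` ones and `q` minus-ones. -/
noncomputable def Jmat (p q : ℕ) : Matrix (Fin (p + q)) (Fin (p + q)) ℂ :=
  Matrix.diagonal (fun i => if (i : ℕ) < p then 1 else -1)

/-- The indefinite pairing `⟨z,w⟩ = Σ_{i<p} z_i conj(w_i) − Σ_{i≥p} z_i conj(w_i)`;
equivalently `w† · z` where `x† = (J conj(x))ᵀ`. -/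
noncomputable def pairing (p q : ℕ) (z w : Fin (p + q) → ℂ) : ℂ :=
  ∑ i : Fin (p + q),
    (if (i : ℕ) < p then z i * (starRingEnd ℂ) (w i) else -(z i * (starRingEnd ℂ) (w i)))

/-- The diagonal entries of `Λ = diag(λ_p, …, λ_1, μ_1, …, μ_q)`, where `lam` and `mu`
are 0-indexed: `lam i = λ_{i+1}` and `mu j = μ_{j+1}`. -/
noncomputable def diagEntries (p q : ℕ) (lam : Fin p → ℝ) (mu : Fin q → ℝ) :
    Fin (p + q) → ℂ :=
  fun i =>
    if h : (i : ℕ) < p then ((lam ⟨p - 1 - (i : ℕ), by omega⟩ : ℝ) : ℂ)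
    else ((mu ⟨(i : ℕ) - p, by have := i.isLt; omega⟩ : ℝ) : ℂ)

/-- `A` is an admissible pseudo-Hermitian matrix with (real) eigenvalues
`λ_p ≥ … ≥ λ_1 > μ_1 ≥ … ≥ μ_q`, recorded 0-indexed as `lam i = λ_{i+1}` (so `lam` is
monotone) and `mu j = μ_{j+1}` (so `mu` is antitone), with `λ_1 > μ_1`, and
`A = U Λ U⁻¹` for some invertible `U` with `U J Uᴴ = J`. -/
def IsAdmissible (p q : ℕ) (hp : 0 < p) (hq : 0 < q)
    (A : Matrix (Fin (p + q)) (Fin (p + q)) ℂ)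
    (lam : Fin p → ℝ) (mu : Fin q → ℝ) : Prop :=
  A * Jmat p q = Jmat p q * A.conjTranspose ∧
  Monotone lam ∧ Antitone mu ∧ mu ⟨0, hq⟩ < lam ⟨0, hp⟩ ∧
  ∃ U : Matrix (Fin (p + q)) (Fin (p + q)) ℂ,
    IsUnit U ∧ U * Jmat p q * U.conjTranspose = Jmat p q ∧
    A = U * Matrix.diagonal (diagEntries p q lam mu) * U⁻¹

/-- The Rayleigh ratio `R_A(x) = (x† A x)/(x† x)`, as a real number (for admissible
pseudo-Hermitian `A` both `x† A x` and `x† x` are real). -/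
noncomputable def rayleigh (p q : ℕ) (A : Matrix (Fin (p + q)) (Fin (p + q)) ℂ)
    (x : Fin (p + q) → ℂ) : ℝ :=
  (pairing p q (A.mulVec x) x).re / (pairing p q x x).re

theorem Matrix.conjTranspose_mul_mul_self_eq_of_mul_mul_conjTranspose_eq
    {n R : Type*} [Fintype n] [DecidableEq n] [CommRing R] [StarRing R]
    {J U : Matrix n n R} (hJ : J * J = 1) (hU : U * J * Uᴴ = J) :
    Uᴴ * J * U = J := by
  have hright : U * (J * Uᴴ * J) = 1 := by
    rw [← Matrix.mul_assoc, ← Matrix.mul_assoc, hU, hJ]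
  have hleft : J * Uᴴ * J * U = 1 := mul_eq_one_comm.mp hright
  calc Uᴴ * J * U = J * (J * Uᴴ * J * U) := by
        simp only [← Matrix.mul_assoc, hJ, Matrix.one_mul]
    _ = J := by rw [hleft, Matrix.mul_one]

section Pairing

variable {p q : ℕ}

theorem Jmat_mul_self : Jmat p q * Jmat p q = 1 := by
  rw [Jmat, diagonal_mul_diagonal, ← diagonal_one]
  congr 1
  funext i
  split_ifs <;> norm_num

theorem pairing_eq_star_dotProduct (z w : Fin (p + q) → ℂ) :
    pairing p q z w = star w ⬝ᵥ Jmat p q *ᵥ z := by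
  simp only [pairing, Jmat, dotProduct, mulVec_diagonal, Pi.star_apply]
  refine Finset.sum_congr rfl fun i _ => ?_
  split_ifs <;> simp <;> ring

theorem pairing_mulVec_mulVec {U : Matrix (Fin (p + q)) (Fin (p + q)) ℂ}
    (hU : Uᴴ * Jmat p q * U = Jmat p q) (z w : Fin (p + q) → ℂ) :
    pairing p q (U *ᵥ z) (U *ᵥ w) = pairing p q z w := by
  rw [pairing_eq_star_dotProduct, pairing_eq_star_dotProduct, star_mulVec, mulVec_mulVec,
    dotProduct_mulVec, vecMul_vecMul, ← Matrix.mul_assoc, hU, ← dotProduct_mulVec]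

theorem pairing_diagonal_mulVec_re (d y : Fin (p + q) → ℂ) :
    (pairing p q (diagonal d *ᵥ y) y).re =
      ∑ i : Fin (p + q), if (i : ℕ) < p then (d i).re * Complex.normSq (y i)
        else -((d i).re * Complex.normSq (y i)) := by
  simp only [pairing, mulVec_diagonal, mul_assoc, Complex.mul_conj, Complex.re_sum]
  refine Finset.sum_congr rfl fun i _ => ?_
  split_ifs <;> simp

theorem pairing_self_re (y : Fin (p + q) → ℂ) :
    (pairing p q y y).re =
      ∑ i : Fin (p + q), if (i : ℕ) < p then Complex.normSq (y i) else -Complex.normSq (y i) := by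
  simpa [diagonal_one] using pairing_diagonal_mulVec_re (fun _ => 1) y

theorem rayleigh_conj_mulVec {U : Matrix (Fin (p + q)) (Fin (p + q)) ℂ} (hU : IsUnit U)
    (hUJ : Uᴴ * Jmat p q * U = Jmat p q) (D : Matrix (Fin (p + q)) (Fin (p + q)) ℂ)
    (y : Fin (p + q) → ℂ) :
    rayleigh p q (U * D * U⁻¹) (U *ᵥ y) = rayleigh p q D y := by
  have hconj : (U * D * U⁻¹) *ᵥ (U *ᵥ y) = U *ᵥ (D *ᵥ y) := by
    rw [mulVec_mulVec, Matrix.mul_assoc,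
      nonsing_inv_mul _ ((isUnit_iff_isUnit_det U).mp hU), Matrix.mul_one, mulVec_mulVec]
  rw [rayleigh, rayleigh, hconj, pairing_mulVec_mulVec hUJ, pairing_mulVec_mulVec hUJ]

theorem le_rayleigh_diagonal {c : ℝ} {d : Fin (p + q) → ℂ}
    (hpos : ∀ i : Fin (p + q), (i : ℕ) < p → c ≤ (d i).re)
    (hneg : ∀ i : Fin (p + q), ¬(i : ℕ) < p → (d i).re ≤ c)
    {y : Fin (p + q) → ℂ} (hy : 0 < (pairing p q y y).re) :
    c ≤ rayleigh p q (diagonal d) y := by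
  rw [rayleigh, le_div_iff₀ hy, pairing_self_re, pairing_diagonal_mulVec_re, Finset.mul_sum]
  refine Finset.sum_le_sum fun i _ => ?_
  have hsq := Complex.normSq_nonneg (y i)
  split_ifs with hi
  · exact mul_le_mul_of_nonneg_right (hpos i hi) hsq
  · nlinarith [hneg i hi]

theorem pairing_single_self_re (i : Fin (p + q)) :
    (pairing p q (Pi.single i 1) (Pi.single i 1)).re = if (i : ℕ) < p then 1 else -1 := by
  rw [pairing_self_re, Finset.sum_eq_single i (fun j _ hj => by simp [hj]) (by simp)]
  simp

theorem rayleigh_diagonal_single (d : Fin (p + q) → ℂ) (i : Fin (p + q)) :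
    rayleigh p q (diagonal d) (Pi.single i 1) = (d i).re := by
  rw [rayleigh, pairing_single_self_re, pairing_diagonal_mulVec_re,
    Finset.sum_eq_single i (fun j _ hj => by simp [hj]) (by simp)]
  split_ifs <;> simp

end Pairing

section DiagEntries

variable {p q : ℕ} {lam : Fin p → ℝ} {mu : Fin q → ℝ}

theorem lam_zero_le_diagEntries_re (hp : 0 < p) (hlam : Monotone lam) (i : Fin (p + q))
    (hi : (i : ℕ) < p) : lam ⟨0, hp⟩ ≤ (diagEntries p q lam mu i).re := by
  simpa [diagEntries, hi] using hlam (show (⟨0, hp⟩ : Fin p) ≤ _ from Nat.zero_le _)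

theorem diagEntries_re_le_lam_zero (hp : 0 < p) (hq : 0 < q) (hmu : Antitone mu)
    (hlm : mu ⟨0, hq⟩ < lam ⟨0, hp⟩) (i : Fin (p + q)) (hi : ¬(i : ℕ) < p) :
    (diagEntries p q lam mu i).re ≤ lam ⟨0, hp⟩ := by
  simpa [diagEntries, hi] using (hmu (show (⟨0, hq⟩ : Fin q) ≤ _ from Nat.zero_le _)).trans hlm.le

theorem diagEntries_re_pred (hp : 0 < p) :
    (diagEntries p q lam mu ⟨p - 1, by omega⟩).re = lam ⟨0, hp⟩ := by
  simp [diagEntries, hp]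

end DiagEntries

/-- for admissible pseudo-Hermitian `A`,
`λ_1 = min_{x ∈ ℂⁿ₊} R_A(x)`. -/
theorem lambda_one_is_min_of_rayleigh_on_pos_cone
    (p q : ℕ) (hp : 0 < p) (hq : 0 < q)
    (A : Matrix (Fin (p + q)) (Fin (p + q)) ℂ)
    (lam : Fin p → ℝ) (mu : Fin q → ℝ)
    (hA : IsAdmissible p q hp hq A lam mu) :
    (∀ x : Fin (p + q) → ℂ, 0 < (pairing p q x x).re →
        lam ⟨0, hp⟩ ≤ rayleigh p q A x) ∧
    (∃ x : Fin (p + q) → ℂ, 0 < (pairing p q x x).re ∧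
        rayleigh p q A x = lam ⟨0, hp⟩) := by
  obtain ⟨-, hlam, hmu, hlm, U, hU, hUJ, rfl⟩ := hA
  have hUJU := conjTranspose_mul_mul_self_eq_of_mul_mul_conjTranspose_eq Jmat_mul_self hUJ
  constructor
  · intro x hx
    have hx_eq : U *ᵥ (U⁻¹ *ᵥ x) = x := by
      rw [mulVec_mulVec, mul_nonsing_inv _ ((isUnit_iff_isUnit_det U).mp hU), one_mulVec]
    rw [← hx_eq, pairing_mulVec_mulVec hUJU] at hx
    rw [← hx_eq, rayleigh_conj_mulVec hU hUJU]
    exact le_rayleigh_diagonal (lam_zero_le_diagEntries_re hp hlam)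
      (diagEntries_re_le_lam_zero hp hq hmu hlm) hx
  · refine ⟨U *ᵥ Pi.single ⟨p - 1, by omega⟩ 1, ?_, ?_⟩
    · rw [pairing_mulVec_mulVec hUJU, pairing_single_self_re, if_pos (Nat.sub_one_lt_of_lt hp)]
      exact one_pos
    · rw [rayleigh_conj_mulVec hU hUJU, rayleigh_diagonal_single, diagEntries_re_pred]
end

section
/- Let A be an admissible pseudo-Hermitian n×n matrix with eigenvalues λ_p ≥ … ≥ λ_1 > μ_1 ≥ … ≥ μ_q and pseudo-orthonormal eigenbasis v_1,…,v_p, w_1,…,w_q. For each 1 ≤ k ≤ p, λ_k = min of R_A(x) over x ∈ ℂⁿ₊ satisfying ⟨x, v_i⟩ = 0 for all 1 ≤ i ≤ k−1; precisely: every such x satisfies R_A(x) ≥ λ_k, and equality holds for x = v_k. -/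
/-!
Expand `x = ∑ aᵢ vᵢ + ∑ bⱼ wⱼ` in the pseudo-orthonormal eigenbasis. Then
`⟨x,x⟩ = ∑ |aᵢ|² - ∑ |bⱼ|²` and `⟨Ax,x⟩ = ∑ λᵢ |aᵢ|² - ∑ μⱼ |bⱼ|²`, so
`⟨Ax,x⟩ - λ_k ⟨x,x⟩ = ∑ (λᵢ - λ_k) |aᵢ|² + ∑ (λ_k - μⱼ) |bⱼ|²`.
Orthogonality to `v₁, …, v_{k-1}` kills `aᵢ` for `i < k`, and every remaining coefficient is
nonnegative since `λᵢ ≥ λ_k` for `i ≥ k` and `μⱼ ≤ μ₁ < λ₁ ≤ λ_k`.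
-/

open Matrix

/-- A pseudo-orthonormal eigenbasis `v_1, …, v_p, w_1, …, w_q` (0-indexed) of an admissible
matrix `A`: a basis of `ℂⁿ` with `A v_i = λ_i v_i`, `A w_j = μ_j w_j`, `⟨v_i,v_i⟩ = 1`,
`⟨w_j,w_j⟩ = −1`, and all pairings of distinct basis vectors zero. -/
def IsPseudoONEigenbasis (p q : ℕ) (A : Matrix (Fin (p + q)) (Fin (p + q)) ℂ)
    (lam : Fin p → ℝ) (mu : Fin q → ℝ)
    (v : Fin p → Fin (p + q) → ℂ) (w : Fin q → Fin (p + q) → ℂ) : Prop :=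
  LinearIndependent ℂ (Fin.append v w) ∧
  Submodule.span ℂ (Set.range (Fin.append v w)) = ⊤ ∧
  (∀ i, A.mulVec (v i) = (lam i : ℂ) • v i) ∧
  (∀ j, A.mulVec (w j) = (mu j : ℂ) • w j) ∧
  (∀ i i', pairing p q (v i) (v i') = if i = i' then 1 else 0) ∧
  (∀ j j', pairing p q (w j) (w j') = if j = j' then -1 else 0) ∧
  (∀ i j, pairing p q (v i) (w j) = 0) ∧
  (∀ j i, pairing p q (w j) (v i) = 0)

namespace LinearMap

variable {E ι : Type*} [AddCommGroup E] [Module ℂ E] [Fintype ι]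
  {B : E →ₗ[ℂ] E →ₗ⋆[ℂ] ℂ} {u : ι → E}

theorem IsOrthoᵢ.apply_sum_smul_left (hu : B.IsOrthoᵢ u) (a : ι → ℂ) (m : ι) :
    B (∑ m', a m' • u m') (u m) = a m * B (u m) (u m) := by
  simp only [map_sum, map_smul, LinearMap.sum_apply, LinearMap.smul_apply, smul_eq_mul]
  exact Finset.sum_eq_single m (fun m' _ hm' => by rw [hu hm', mul_zero])
    (by simp)

theorem IsOrthoᵢ.apply_sum_smul_sum_smul (hu : B.IsOrthoᵢ u) (a b : ι → ℂ) :
    B (∑ m, a m • u m) (∑ m, b m • u m) = ∑ m, a m * star (b m) * B (u m) (u m) := by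
  rw [map_sum]
  refine Finset.sum_congr rfl fun m _ => ?_
  rw [map_smulₛₗ, hu.apply_sum_smul_left, smul_eq_mul, starRingEnd_apply]
  ring

theorem IsOrthoᵢ.re_apply_sum_smul_sum_smul (hu : B.IsOrthoᵢ u) {s : ι → ℝ}
    (hs : ∀ m, B (u m) (u m) = s m) (a c : ι → ℂ) :
    (B (∑ m, a m • u m) (∑ m, c m • u m)).re = ∑ m, (a m * star (c m)).re * s m := by
  simp only [hu.apply_sum_smul_sum_smul, hs, Complex.re_sum, Complex.re_mul_ofReal]

theorem IsOrthoᵢ.mul_re_le_re_apply_of_eigen (hu : B.IsOrthoᵢ u)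
    (hspan : Submodule.span ℂ (Set.range u) = ⊤) {f : E →ₗ[ℂ] E} {d s : ι → ℝ}
    (hf : ∀ m, f (u m) = (d m : ℂ) • u m) (hs : ∀ m, B (u m) (u m) = s m) {t : ℝ} {x : E}
    (hx : ∀ m, B x (u m) = 0 ∨ t * s m ≤ d m * s m) :
    t * (B x x).re ≤ (B (f x) x).re := by
  obtain ⟨c, rfl⟩ :=
    (Submodule.mem_span_range_iff_exists_fun ℂ).mp (hspan ▸ Submodule.mem_top (x := x))
  have hfx : f (∑ m, c m • u m) = ∑ m, (c m * d m) • u m := by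
    simp only [map_sum, map_smul, hf, smul_smul]
  rw [hfx, hu.re_apply_sum_smul_sum_smul hs, hu.re_apply_sum_smul_sum_smul hs, Finset.mul_sum]
  refine Finset.sum_le_sum fun m _ => ?_
  have hnormSq : (c m * star (c m)).re = Complex.normSq (c m) := by
    rw [← starRingEnd_apply, Complex.mul_conj, Complex.ofReal_re]
  have hdnormSq : (c m * d m * star (c m)).re = d m * Complex.normSq (c m) := by
    rw [mul_right_comm, Complex.re_mul_ofReal, hnormSq, mul_comm]
  rw [hnormSq, hdnormSq]
  rcases hx m with hzero | hle
  · rw [hu.apply_sum_smul_left, hs, mul_eq_zero, Complex.ofReal_eq_zero] at hzero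
    rcases hzero with hc | hs0
    · simp [hc]
    · simp [hs0]
  · nlinarith [Complex.normSq_nonneg (c m)]

end LinearMap

section Pairing

variable {p q : ℕ}

theorem pairing_add_left (z z' w : Fin (p + q) → ℂ) :
    pairing p q (z + z') w = pairing p q z w + pairing p q z' w := by
  simp only [pairing, ← Finset.sum_add_distrib, Pi.add_apply]
  exact Finset.sum_congr rfl fun i _ => by split_ifs <;> ring

theorem pairing_smul_left (c : ℂ) (z w : Fin (p + q) → ℂ) :
    pairing p q (c • z) w = c * pairing p q z w := by
  simp only [pairing, Finset.mul_sum, Pi.smul_apply, smul_eq_mul]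
  exact Finset.sum_congr rfl fun i _ => by split_ifs <;> ring

theorem pairing_add_right (z w w' : Fin (p + q) → ℂ) :
    pairing p q z (w + w') = pairing p q z w + pairing p q z w' := by
  simp only [pairing, ← Finset.sum_add_distrib, Pi.add_apply, map_add]
  exact Finset.sum_congr rfl fun i _ => by split_ifs <;> ring

theorem pairing_smul_right (c : ℂ) (z w : Fin (p + q) → ℂ) :
    pairing p q z (c • w) = starRingEnd ℂ c * pairing p q z w := by
  simp only [pairing, Finset.mul_sum, Pi.smul_apply, smul_eq_mul, map_mul]
  exact Finset.sum_congr rfl fun i _ => by split_ifs <;> ring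

variable (p q) in
noncomputable def pairingₛₗ : (Fin (p + q) → ℂ) →ₗ[ℂ] (Fin (p + q) → ℂ) →ₗ⋆[ℂ] ℂ :=
  LinearMap.mk₂'ₛₗ _ _ (pairing p q) pairing_add_left pairing_smul_left pairing_add_right
    pairing_smul_right

@[simp]
theorem pairingₛₗ_apply (z w : Fin (p + q) → ℂ) : pairingₛₗ p q z w = pairing p q z w := rfl

theorem rayleigh_of_mulVec_eq_smul {A : Matrix (Fin (p + q)) (Fin (p + q)) ℂ}
    {x : Fin (p + q) → ℂ} {c : ℝ} (hx : A *ᵥ x = (c : ℂ) • x) (hxx : (pairing p q x x).re ≠ 0) :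
    rayleigh p q A x = c := by
  rw [rayleigh, hx, pairing_smul_left, Complex.re_ofReal_mul, mul_div_cancel_right₀ _ hxx]

end Pairing

namespace IsPseudoONEigenbasis

variable {p q : ℕ} {A : Matrix (Fin (p + q)) (Fin (p + q)) ℂ} {lam : Fin p → ℝ} {mu : Fin q → ℝ}
  {v : Fin p → Fin (p + q) → ℂ} {w : Fin q → Fin (p + q) → ℂ}

theorem isOrthoᵢ (h : IsPseudoONEigenbasis p q A lam mu v w) :
    (pairingₛₗ p q).IsOrthoᵢ (Fin.append v w) := by
  obtain ⟨-, -, -, -, hvv, hww, hvw, hwv⟩ := h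
  rw [LinearMap.isOrthoᵢ_def]
  intro m m' hne
  induction m using Fin.addCases <;> induction m' using Fin.addCases <;>
    simp_all [Fin.ext_iff]

theorem pairing_append_self (h : IsPseudoONEigenbasis p q A lam mu v w) (m : Fin (p + q)) :
    pairingₛₗ p q (Fin.append v w m) (Fin.append v w m)
      = (Fin.append (fun _ => 1) (fun _ => -1) m : ℝ) := by
  obtain ⟨-, -, -, -, hvv, hww, -, -⟩ := h
  induction m using Fin.addCases <;> simp [hvv, hww]

theorem mulVec_append (h : IsPseudoONEigenbasis p q A lam mu v w) (m : Fin (p + q)) :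
    A.mulVecLin (Fin.append v w m) = ((Fin.append lam mu m : ℝ) : ℂ) • Fin.append v w m := by
  obtain ⟨-, -, hv, hw, -⟩ := h
  induction m using Fin.addCases <;> simp [hv, hw]

theorem le_rayleigh (h : IsPseudoONEigenbasis p q A lam mu v w) {t : ℝ}
    {x : Fin (p + q) → ℂ} (hx : 0 < (pairing p q x x).re)
    (hv : ∀ i, pairing p q x (v i) = 0 ∨ t ≤ lam i) (hw : ∀ j, mu j ≤ t) :
    t ≤ rayleigh p q A x := by
  refine (le_div_iff₀ hx).mpr <|
    h.isOrthoᵢ.mul_re_le_re_apply_of_eigen h.2.1 h.mulVec_append h.pairing_append_self fun m => ?_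
  induction m using Fin.addCases with
  | left i => simpa using hv i
  | right j => simpa using Or.inr (hw j)

theorem rayleigh_v (h : IsPseudoONEigenbasis p q A lam mu v w) (i : Fin p) :
    rayleigh p q A (v i) = lam i :=
  rayleigh_of_mulVec_eq_smul (h.2.2.1 i) (by simp [h.2.2.2.2.1])

end IsPseudoONEigenbasis

/-- `λ_k` is the minimum of `R_A(x)` over `x ∈ ℂⁿ₊` orthogonal to
`v_1, …, v_{k-1}`; the minimum is attained at `v_k`.  (Here `k` is 1-indexed,
`1 ≤ k ≤ p`, and `v i`, `lam i` are 0-indexed, so `λ_k = lam ⟨k-1,_⟩`.) -/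
theorem lambda_k_min_orthogonal_to_lower_eigenvectors
    (p q : ℕ) (hp : 0 < p) (hq : 0 < q)
    (A : Matrix (Fin (p + q)) (Fin (p + q)) ℂ)
    (lam : Fin p → ℝ) (mu : Fin q → ℝ)
    (v : Fin p → Fin (p + q) → ℂ) (w : Fin q → Fin (p + q) → ℂ)
    (hA : IsAdmissible p q hp hq A lam mu)
    (hvw : IsPseudoONEigenbasis p q A lam mu v w)
    (k : ℕ) (hk2 : k ≤ p) :
    (∀ x : Fin (p + q) → ℂ, 0 < (pairing p q x x).re →
        (∀ i : Fin p, (i : ℕ) < k - 1 → pairing p q x (v i) = 0) →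
        lam ⟨k - 1, by omega⟩ ≤ rayleigh p q A x) ∧
    0 < (pairing p q (v ⟨k - 1, by omega⟩) (v ⟨k - 1, by omega⟩)).re ∧
    (∀ i : Fin p, (i : ℕ) < k - 1 → pairing p q (v ⟨k - 1, by omega⟩) (v i) = 0) ∧
    rayleigh p q A (v ⟨k - 1, by omega⟩) = lam ⟨k - 1, by omega⟩ := by
  obtain ⟨-, hmono, hanti, hgap, -⟩ := hA
  have hvv := hvw.2.2.2.2.1
  set kk : Fin p := ⟨k - 1, by omega⟩
  refine ⟨fun x hx hxv => hvw.le_rayleigh hx (fun i => ?_) (fun j => ?_), by simp [hvv],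
    fun i hi => ?_, hvw.rayleigh_v kk⟩
  · by_cases hi : (i : ℕ) < k - 1
    · exact Or.inl (hxv i hi)
    · exact Or.inr (hmono (Fin.le_def.mpr (Nat.le_of_not_lt hi)))
  · exact (hanti (Fin.le_def.mpr j.val.zero_le)).trans
      (hgap.le.trans (hmono (Fin.le_def.mpr kk.val.zero_le)))
  · rw [hvv, if_neg (Fin.ne_of_val_ne (Nat.ne_of_gt hi))]
end

section
/- (Lidskii–Wielandt analogue for λ's.) Let A and B be admissible pseudo-Hermitian n×n matrices, and suppose C = A + B is also admissible. Denote by λ_p(·) ≥ … ≥ λ_1(·) > μ_1(·) ≥ … ≥ μ_q(·) the eigenvalues of each of A, B, C. Then for every m and all integers 1 ≤ i_1 < i_2 < … < i_m ≤ p one has Σ_{k=1}^m λ_{i_k}(C) ≥ Σ_{k=1}^m λ_{i_k}(A) + Σ_{k=1}^m λ_k(B). -/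
open Matrix

/-!
Conjugating by the `J`-unitary matrix that diagonalizes `C = A + B`, we may assume that
`C = Λ_C` is diagonal. The top-left `p × p` blocks `A₁₁`, `B₁₁` of the conjugated `A`, `B` are
then Hermitian (by pseudo-Hermiticity) and add up to `diag(λ(C))`, so the classical
Lidskii–Wielandt inequality for Hermitian matrices applies to them. It remains to show
`λ_j(A) ≤ λ_j(A₁₁)`. Write `A = S Λ S⁻¹`; on the image under `S` of the coordinates carrying
`λ_j, …, λ_p` and all the `μ`'s, a subspace of dimension `p - j + 1 + q`, the indefinite
form satisfies `⟨Ax, x⟩ ≥ λ_j ⟨x, x⟩`, because `μ_1 < λ_1` and the `μ`-coordinates enter with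
a minus sign. That subspace meets `ℂᵖ ⊕ 0`, where the indefinite form is the Euclidean one, in
dimension at least `p - j + 1`, and Courant–Fischer gives the bound.

The Hermitian inequality itself comes from splitting `B = B₋ + λ_m(B) + B₊` with `B₋ ≤ 0`
supported on the `m` smallest eigenvalues and `B₊ ≥ 0`: Weyl monotonicity bounds the
eigenvalues of `A + B₋` above by those of `A` and by those of `C` shifted down by `λ_m(B)`,
and comparing traces of `A + B₋` and `A` finishes the argument.
-/

open Module

namespace LidskiiWielandt

section FiniteDimensional

variable {K E F : Type*} [Field K] [AddCommGroup E] [Module K E] [FiniteDimensional K E]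
  [AddCommGroup F] [Module K F] [FiniteDimensional K F]

lemma exists_ne_zero_mem_inf_of_finrank_lt {V W : Submodule K E}
    (h : finrank K E < finrank K V + finrank K W) : ∃ x ∈ V ⊓ W, x ≠ 0 := by
  have hsup := Submodule.finrank_sup_add_finrank_inf_eq V W
  have hle := Submodule.finrank_le (V ⊔ W)
  exact Submodule.exists_mem_ne_zero_of_ne_bot fun hbot => by
    rw [hbot, finrank_bot] at hsup
    omega

lemma finrank_add_finrank_le_finrank_comap {f : E →ₗ[K] F} (hf : Function.Injective f)
    (W : Submodule K F) :
    finrank K E + finrank K W ≤ finrank K F + finrank K (W.comap f) := by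
  have hsup := Submodule.finrank_sup_add_finrank_inf_eq (LinearMap.range f) W
  have hle := Submodule.finrank_le (LinearMap.range f ⊔ W)
  have hrange : finrank K (LinearMap.range f) = finrank K E := LinearMap.finrank_range_of_inj hf
  have hcomap : finrank K (W.comap f) = finrank K (LinearMap.range f ⊓ W : Submodule K F) := by
    rw [← Submodule.map_comap_eq, (Submodule.equivMapOfInjective f hf _).finrank_eq]
  omega

end FiniteDimensional

section CoordinateSubspace

variable {K ι : Type*} [Field K] [Fintype ι]

noncomputable def coordSubspace (P : Finset ι) : Submodule K (ι → K) :=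
  Submodule.span K (Pi.basisFun K ι '' P)

lemma mem_coordSubspace {P : Finset ι} {x : ι → K} :
    x ∈ coordSubspace P ↔ ∀ i, x i ≠ 0 → i ∈ P := by
  rw [coordSubspace, Basis.mem_span_image]
  simp [Set.subset_def]

lemma finrank_coordSubspace (P : Finset ι) : finrank K (coordSubspace (K := K) P) = P.card := by
  rw [coordSubspace, Set.image_eq_range, finrank_span_eq_card]
  · simp
  · exact (Pi.basisFun K ι).linearIndependent.comp _ Subtype.val_injective

lemma finrank_map_mulVecLin [DecidableEq ι] {S : Matrix ι ι K} (hS : IsUnit S)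
    (W : Submodule K (ι → K)) :
    finrank K (W.map S.mulVecLin) = finrank K W :=
  (Submodule.equivMapOfInjective _ (mulVec_injective_of_isUnit hS) W).finrank_eq.symm

end CoordinateSubspace

section Hermitian

variable {N : ℕ}

noncomputable def sqNorm (x : Fin N → ℂ) : ℝ := ∑ i, Complex.normSq (x i)

noncomputable def quadForm (M : Matrix (Fin N) (Fin N) ℂ) (x : Fin N → ℂ) : ℝ :=
  (star x ⬝ᵥ (M *ᵥ x)).re

def IsUnitarilyDiagonal (M : Matrix (Fin N) (Fin N) ℂ) (d : Fin N → ℝ) : Prop :=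
  ∃ U ∈ unitaryGroup (Fin N) ℂ, M = U * diagonal (fun i => (d i : ℂ)) * Uᴴ

lemma sqNorm_pos {x : Fin N → ℂ} (hx : x ≠ 0) : 0 < sqNorm x := by
  obtain ⟨i, hi⟩ := Function.ne_iff.mp hx
  exact Finset.sum_pos' (fun j _ => Complex.normSq_nonneg _)
    ⟨i, Finset.mem_univ _, Complex.normSq_pos.mpr hi⟩

lemma star_dotProduct_self (x : Fin N → ℂ) : star x ⬝ᵥ x = sqNorm x := by
  simp [dotProduct, sqNorm, Complex.normSq_eq_conj_mul_self]

lemma sqNorm_conjTranspose_mulVec {U : Matrix (Fin N) (Fin N) ℂ}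
    (hU : U ∈ unitaryGroup (Fin N) ℂ) (x : Fin N → ℂ) : sqNorm (Uᴴ *ᵥ x) = sqNorm x := by
  have h : star (Uᴴ *ᵥ x) ⬝ᵥ (Uᴴ *ᵥ x) = star x ⬝ᵥ x := by
    rw [star_mulVec, conjTranspose_conjTranspose, dotProduct_mulVec, vecMul_vecMul,
      ← star_eq_conjTranspose, Unitary.mul_star_self_of_mem hU, vecMul_one]
  exact_mod_cast (star_dotProduct_self _).symm.trans (h.trans (star_dotProduct_self x))

lemma quadForm_add (M M' : Matrix (Fin N) (Fin N) ℂ) (x : Fin N → ℂ) :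
    quadForm (M + M') x = quadForm M x + quadForm M' x := by
  simp [quadForm, add_mulVec, dotProduct_add]

lemma quadForm_unitary_conj {U : Matrix (Fin N) (Fin N) ℂ} (d : Fin N → ℝ) (x : Fin N → ℂ) :
    quadForm (U * diagonal (fun i => (d i : ℂ)) * Uᴴ) x =
      ∑ i, d i * Complex.normSq ((Uᴴ *ᵥ x) i) := by
  have h : star x ᵥ* U = star (Uᴴ *ᵥ x) := by rw [star_mulVec, conjTranspose_conjTranspose]
  rw [quadForm, ← mulVec_mulVec, ← mulVec_mulVec, dotProduct_mulVec, h]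
  generalize Uᴴ *ᵥ x = y
  simp only [dotProduct, mulVec_diagonal, Complex.re_sum, Pi.star_apply]
  refine Finset.sum_congr rfl fun i _ => ?_
  rw [mul_left_comm, Complex.star_def, ← Complex.normSq_eq_conj_mul_self, Complex.re_ofReal_mul,
    Complex.ofReal_re]

lemma quadForm_unitary_conj_add_le {U : Matrix (Fin N) (Fin N) ℂ}
    (hU : U ∈ unitaryGroup (Fin N) ℂ) {d d' : Fin N → ℝ} {s : ℝ} (h : ∀ i, d i + s ≤ d' i)
    (x : Fin N → ℂ) :
    quadForm (U * diagonal (fun i => (d i : ℂ)) * Uᴴ) x + s * sqNorm x ≤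
      quadForm (U * diagonal (fun i => (d' i : ℂ)) * Uᴴ) x := by
  rw [quadForm_unitary_conj, quadForm_unitary_conj, ← sqNorm_conjTranspose_mulVec hU, sqNorm,
    Finset.mul_sum, ← Finset.sum_add_distrib]
  exact Finset.sum_le_sum fun i _ => by nlinarith [h i, Complex.normSq_nonneg ((Uᴴ *ᵥ x) i)]

namespace IsUnitarilyDiagonal

variable {M M' : Matrix (Fin N) (Fin N) ℂ} {d d' : Fin N → ℝ}

lemma le_of_forall_mem (hM : IsUnitarilyDiagonal M d) (hd : Monotone d) {j : Fin N}
    {V : Submodule ℂ (Fin N → ℂ)} (hV : N - j ≤ finrank ℂ V) {t : ℝ}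
    (ht : ∀ x ∈ V, t * sqNorm x ≤ quadForm M x) : t ≤ d j := by
  obtain ⟨U, hU, rfl⟩ := hM
  set W := (coordSubspace (Finset.Iic j)).map U.mulVecLin
  have hW : finrank ℂ W = j + 1 := by
    rw [finrank_map_mulVecLin (Unitary.isUnit_coe (U := ⟨U, hU⟩)), finrank_coordSubspace,
      Fin.card_Iic]
  obtain ⟨_, ⟨hxV, y, hy, rfl⟩, hx0⟩ :=
    exists_ne_zero_mem_inf_of_finrank_lt (V := V) (W := W) (by rw [finrank_fin_fun, hW]; omega)
  simp only [SetLike.mem_coe, mulVecLin_apply] at hxV hx0 hy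
  have hUy : Uᴴ *ᵥ (U *ᵥ y) = y := by
    rw [mulVec_mulVec, ← star_eq_conjTranspose, Unitary.star_mul_self_of_mem hU, one_mulVec]
  have hle : quadForm (U * diagonal (fun i => (d i : ℂ)) * Uᴴ) (U *ᵥ y) ≤
      d j * sqNorm (U *ᵥ y) := by
    rw [quadForm_unitary_conj, ← sqNorm_conjTranspose_mulVec hU, hUy, sqNorm, Finset.mul_sum]
    refine Finset.sum_le_sum fun i _ => ?_
    by_cases hyi : y i = 0
    · simp [hyi]
    · have hij : i ≤ j := Finset.mem_Iic.mp (mem_coordSubspace.mp hy i hyi)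
      exact mul_le_mul_of_nonneg_right (hd hij) (Complex.normSq_nonneg _)
  nlinarith [ht _ hxV, sqNorm_pos hx0]

lemma exists_finrank_forall_mem (hM : IsUnitarilyDiagonal M d) (hd : Monotone d) (j : Fin N) :
    ∃ V : Submodule ℂ (Fin N → ℂ), finrank ℂ V = N - j ∧
      ∀ x ∈ V, d j * sqNorm x ≤ quadForm M x := by
  obtain ⟨U, hU, rfl⟩ := hM
  refine ⟨(coordSubspace (Finset.Ici j)).map U.mulVecLin, ?_, ?_⟩
  · rw [finrank_map_mulVecLin (Unitary.isUnit_coe (U := ⟨U, hU⟩)), finrank_coordSubspace,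
      Fin.card_Ici]
  · rintro _ ⟨y, hy, rfl⟩
    have hUy : Uᴴ *ᵥ (U *ᵥ y) = y := by
      rw [mulVec_mulVec, ← star_eq_conjTranspose, Unitary.star_mul_self_of_mem hU, one_mulVec]
    rw [mulVecLin_apply, quadForm_unitary_conj, ← sqNorm_conjTranspose_mulVec hU, hUy, sqNorm,
      Finset.mul_sum]
    refine Finset.sum_le_sum fun i _ => ?_
    by_cases hyi : y i = 0
    · simp [hyi]
    · have hji : j ≤ i := Finset.mem_Ici.mp (mem_coordSubspace.mp hy i hyi)
      exact mul_le_mul_of_nonneg_right (hd hji) (Complex.normSq_nonneg _)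

lemma add_le_of_quadForm_le (hM : IsUnitarilyDiagonal M d) (hd : Monotone d)
    (hM' : IsUnitarilyDiagonal M' d') (hd' : Monotone d') {s : ℝ}
    (h : ∀ x, quadForm M x + s * sqNorm x ≤ quadForm M' x) (j : Fin N) : d j + s ≤ d' j := by
  obtain ⟨V, hV, hVM⟩ := hM.exists_finrank_forall_mem hd j
  exact hM'.le_of_forall_mem hd' hV.ge fun x hx => by linarith [hVM x hx, h x]

lemma trace_eq (hM : IsUnitarilyDiagonal M d) : M.trace = ((∑ i, d i : ℝ) : ℂ) := by
  obtain ⟨U, hU, rfl⟩ := hM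
  rw [trace_mul_cycle, ← star_eq_conjTranspose, Unitary.star_mul_self_of_mem hU, one_mul,
    trace_diagonal]
  push_cast
  rfl

lemma isHermitian (hM : IsUnitarilyDiagonal M d) : M.IsHermitian := by
  obtain ⟨U, -, rfl⟩ := hM
  have hd : star (fun i => (d i : ℂ)) = fun i => (d i : ℂ) :=
    funext fun i => Complex.conj_ofReal _
  simp [IsHermitian, conjTranspose_mul, Matrix.mul_assoc, diagonal_conjTranspose, hd]

lemma comp_equiv (hM : IsUnitarilyDiagonal M d) (e : Equiv.Perm (Fin N)) :
    IsUnitarilyDiagonal M (d ∘ e) := by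
  obtain ⟨U, hU, rfl⟩ := hM
  refine ⟨U.submatrix id e, ?_, ?_⟩
  · rw [mem_unitaryGroup_iff, star_eq_conjTranspose, conjTranspose_submatrix,
      submatrix_mul_equiv, submatrix_id_id, ← star_eq_conjTranspose,
      Unitary.mul_star_self_of_mem hU]
  · have hD : diagonal (fun i => ((d ∘ e) i : ℂ)) =
        (diagonal fun i => (d i : ℂ)).submatrix e e := by
      rw [submatrix_diagonal_equiv]
      rfl
    rw [hD, conjTranspose_submatrix, submatrix_mul_equiv, submatrix_mul_equiv, submatrix_id_id]

end IsUnitarilyDiagonal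

lemma isUnitarilyDiagonal_diagonal (d : Fin N → ℝ) :
    IsUnitarilyDiagonal (diagonal fun i => (d i : ℂ)) d :=
  ⟨1, one_mem _, by simp⟩

lemma exists_monotone_isUnitarilyDiagonal {M : Matrix (Fin N) (Fin N) ℂ}
    (hM : M.IsHermitian) : ∃ d, Monotone d ∧ IsUnitarilyDiagonal M d := by
  have h : IsUnitarilyDiagonal M hM.eigenvalues :=
    ⟨hM.eigenvectorUnitary, hM.eigenvectorUnitary.2, by
      have h := hM.spectral_theorem
      rwa [Unitary.conjStarAlgAut_apply] at h⟩
  exact ⟨_, Tuple.monotone_sort _, h.comp_equiv (Tuple.sort hM.eigenvalues)⟩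

lemma sum_min_sub_eq_sum_castLE {b : Fin N → ℝ} {ν : ℝ} {m : ℕ} (hm : m ≤ N)
    (hlt : ∀ k : Fin m, b (Fin.castLE hm k) ≤ ν) (hge : ∀ i : Fin N, m ≤ i → ν ≤ b i) :
    ∑ i, min (b i - ν) 0 = ∑ k : Fin m, (b (Fin.castLE hm k) - ν) := by
  rw [← Finset.sum_subset (Finset.subset_univ (Finset.univ.map (Fin.castLEEmb hm))),
    Finset.sum_map]
  · exact Finset.sum_congr rfl fun k _ => min_eq_left (by simpa using hlt k)
  · intro i _ hi
    have hmi : m ≤ i := by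
      by_contra h
      exact hi (Finset.mem_map.2 ⟨⟨i, by omega⟩, Finset.mem_univ _, Fin.ext rfl⟩)
    exact min_eq_right (by linarith [hge i hmi])

theorem lidskii_wielandt_hermitian {A B : Matrix (Fin N) (Fin N) ℂ} {a b c : Fin N → ℝ}
    (hA : IsUnitarilyDiagonal A a) (ha : Monotone a) (hB : IsUnitarilyDiagonal B b)
    (hb : Monotone b) (hC : IsUnitarilyDiagonal (A + B) c) (hc : Monotone c)
    {m : ℕ} (hm : m ≤ N) {idx : Fin m → Fin N} (hidx : StrictMono idx) :
    ∑ k, a (idx k) + ∑ k, b (Fin.castLE hm k) ≤ ∑ k, c (idx k) := by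
  rcases Nat.eq_zero_or_pos m with rfl | hm0
  · simp
  set ν := b ⟨m - 1, by omega⟩
  obtain ⟨U, hU, rfl⟩ := hB
  set bm : Fin N → ℝ := fun i => min (b i - ν) 0
  set Bm := U * diagonal (fun i => (bm i : ℂ)) * Uᴴ
  have hBm : IsUnitarilyDiagonal Bm bm := ⟨U, hU, rfl⟩
  obtain ⟨e, he, hE⟩ :=
    exists_monotone_isUnitarilyDiagonal (hA.isHermitian.add hBm.isHermitian)
  have hec : ∀ j, e j + ν ≤ c j := hE.add_le_of_quadForm_le he hC hc fun x => by
    rw [quadForm_add, quadForm_add, add_assoc]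
    gcongr
    exact quadForm_unitary_conj_add_le hU (fun i => by linarith [min_le_left (b i - ν) 0]) x
  have hBm_nonpos : ∀ x, quadForm Bm x ≤ 0 := fun x => by
    rw [quadForm_unitary_conj]
    exact Finset.sum_nonpos fun i _ =>
      mul_nonpos_of_nonpos_of_nonneg (min_le_right _ _) (Complex.normSq_nonneg _)
  have hea : ∀ j, e j ≤ a j := fun j => by
    simpa using hE.add_le_of_quadForm_le he hA ha (s := 0) (fun x => by
      rw [quadForm_add, zero_mul, add_zero]
      linarith [hBm_nonpos x]) j
  have htrace : ∑ i, e i = ∑ i, a i + ∑ i, bm i := by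
    have h := trace_add A Bm
    rw [hE.trace_eq, hA.trace_eq, hBm.trace_eq] at h
    exact_mod_cast h
  have hbm : ∑ i, bm i = ∑ k : Fin m, (b (Fin.castLE hm k) - ν) :=
    sum_min_sub_eq_sum_castLE hm (fun k => hb (Fin.le_def.2 (show (k : ℕ) ≤ m - 1 by omega)))
      (fun i hi => hb (Fin.le_def.2 (show m - 1 ≤ (i : ℕ) by omega)))
  have hidx_sum : ∑ k, (a (idx k) - e (idx k)) ≤ ∑ i, (a i - e i) :=
    calc ∑ k, (a (idx k) - e (idx k)) = ∑ i ∈ Finset.univ.image idx, (a i - e i) :=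
          (Finset.sum_image (f := fun i => a i - e i) fun x _ y _ h => hidx.injective h).symm
      _ ≤ ∑ i, (a i - e i) := Finset.sum_le_sum_of_subset_of_nonneg (Finset.subset_univ _)
          fun i _ _ => sub_nonneg.2 (hea i)
  have hc_sum : ∑ k, (e (idx k) + ν) ≤ ∑ k, c (idx k) := Finset.sum_le_sum fun k _ => hec _
  simp only [Finset.sum_sub_distrib, Finset.sum_add_distrib, Finset.sum_const, Finset.card_univ,
    Fintype.card_fin, nsmul_eq_mul] at hbm hidx_sum hc_sum
  linarith

end Hermitian

section PseudoHermitian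

variable {p q : ℕ}

def IsJUnitary (p q : ℕ) (S : Matrix (Fin (p + q)) (Fin (p + q)) ℂ) : Prop :=
  S * Jmat p q * Sᴴ = Jmat p q

lemma Jmat_mul_Jmat : Jmat p q * Jmat p q = 1 := by
  rw [Jmat, diagonal_mul_diagonal, ← diagonal_one]
  congr 1
  funext i
  split_ifs <;> norm_num

lemma conjTranspose_Jmat : (Jmat p q)ᴴ = Jmat p q := by
  rw [Jmat, diagonal_conjTranspose]
  congr 1
  funext i
  split_ifs <;> simp [*]

namespace IsJUnitary

variable {S T : Matrix (Fin (p + q)) (Fin (p + q)) ℂ}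

lemma inv_eq (hS : IsJUnitary p q S) : S⁻¹ = Jmat p q * Sᴴ * Jmat p q :=
  inv_eq_right_inv <| by rw [← Matrix.mul_assoc, ← Matrix.mul_assoc, hS, Jmat_mul_Jmat]

lemma mul_inv (hS : IsJUnitary p q S) : S * S⁻¹ = 1 := by
  rw [hS.inv_eq, ← Matrix.mul_assoc, ← Matrix.mul_assoc, hS, Jmat_mul_Jmat]

lemma inv_mul (hS : IsJUnitary p q S) : S⁻¹ * S = 1 := mul_eq_one_comm.mp hS.mul_inv

lemma isUnit (hS : IsJUnitary p q S) : IsUnit S := ⟨⟨S, S⁻¹, hS.mul_inv, hS.inv_mul⟩, rfl⟩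

lemma conjTranspose_mul_Jmat_mul (hS : IsJUnitary p q S) : Sᴴ * Jmat p q * S = Jmat p q := by
  have h := hS.inv_mul
  rw [hS.inv_eq] at h
  calc Sᴴ * Jmat p q * S = Jmat p q * (Jmat p q * Sᴴ * Jmat p q * S) := by
        simp only [← Matrix.mul_assoc, Jmat_mul_Jmat, Matrix.one_mul]
    _ = Jmat p q := by rw [h, Matrix.mul_one]

lemma inv (hS : IsJUnitary p q S) : IsJUnitary p q S⁻¹ := by
  rw [IsJUnitary, hS.inv_eq]
  simp only [conjTranspose_mul, conjTranspose_conjTranspose, conjTranspose_Jmat, Matrix.mul_assoc]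
  simp only [← Matrix.mul_assoc (Jmat p q) (Jmat p q), Jmat_mul_Jmat, Matrix.one_mul]
  rw [← Matrix.mul_assoc Sᴴ, ← Matrix.mul_assoc (Sᴴ * Jmat p q), hS.conjTranspose_mul_Jmat_mul,
    ← Matrix.mul_assoc, Jmat_mul_Jmat, Matrix.one_mul]

lemma mul (hS : IsJUnitary p q S) (hT : IsJUnitary p q T) : IsJUnitary p q (S * T) := by
  calc S * T * Jmat p q * (S * T)ᴴ = S * (T * Jmat p q * Tᴴ) * Sᴴ := by
        simp only [conjTranspose_mul, Matrix.mul_assoc]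
    _ = Jmat p q := by rw [hT, hS]

end IsJUnitary

lemma Jmat_mul_of_pseudoHermitian {A : Matrix (Fin (p + q)) (Fin (p + q)) ℂ}
    (hA : A * Jmat p q = Jmat p q * Aᴴ) : Jmat p q * A = Aᴴ * Jmat p q :=
  calc Jmat p q * A = Jmat p q * (A * Jmat p q) * Jmat p q := by
        rw [Matrix.mul_assoc, Matrix.mul_assoc, Jmat_mul_Jmat, Matrix.mul_one]
    _ = Aᴴ * Jmat p q := by rw [hA, ← Matrix.mul_assoc, Jmat_mul_Jmat, Matrix.one_mul]

lemma IsAdmissible.conj {hp : 0 < p} {hq : 0 < q} {A U : Matrix (Fin (p + q)) (Fin (p + q)) ℂ}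
    {lam : Fin p → ℝ} {mu : Fin q → ℝ} (hA : IsAdmissible p q hp hq A lam mu)
    (hU : IsJUnitary p q U) : IsAdmissible p q hp hq (U⁻¹ * A * U) lam mu := by
  obtain ⟨hAJ, hlam, hmu, hgap, V, -, hV, hAV⟩ := hA
  refine ⟨?_, hlam, hmu, hgap, U⁻¹ * V, (hU.inv.mul hV).isUnit, hU.inv.mul hV, ?_⟩
  · have hJA := Jmat_mul_of_pseudoHermitian hAJ
    rw [hU.inv_eq]
    simp only [conjTranspose_mul, conjTranspose_conjTranspose, conjTranspose_Jmat,
      Matrix.mul_assoc]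
    rw [← Matrix.mul_assoc (Jmat p q) A, hJA]
    simp only [Matrix.mul_assoc]
  · rw [hAV, Matrix.mul_inv_rev, Matrix.nonsing_inv_nonsing_inv U
      ((isUnit_iff_isUnit_det U).mp hU.isUnit)]
    simp only [Matrix.mul_assoc]

def topLeft (X : Matrix (Fin (p + q)) (Fin (p + q)) ℂ) : Matrix (Fin p) (Fin p) ℂ :=
  X.submatrix (Fin.castAdd q) (Fin.castAdd q)

lemma isHermitian_topLeft {X : Matrix (Fin (p + q)) (Fin (p + q)) ℂ}
    (hX : X * Jmat p q = Jmat p q * Xᴴ) : (topLeft X).IsHermitian := by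
  ext i j
  simpa [Jmat, topLeft] using (congrFun (congrFun hX (Fin.castAdd q i)) (Fin.castAdd q j)).symm

lemma topLeft_diagonal_diagEntries (lam : Fin p → ℝ) (mu : Fin q → ℝ) :
    topLeft (diagonal (diagEntries p q lam mu)) = diagonal fun i => (lam i.rev : ℂ) := by
  rw [topLeft, submatrix_diagonal _ _ (Fin.castAdd_injective p q)]
  congr 1
  funext i
  simp only [Function.comp_apply, diagEntries, Fin.val_castAdd, i.isLt, dif_pos]
  congr 3
  omega

lemma isUnitarilyDiagonal_topLeft_diagonal (lam : Fin p → ℝ) (mu : Fin q → ℝ) :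
    IsUnitarilyDiagonal (topLeft (diagonal (diagEntries p q lam mu))) lam := by
  rw [topLeft_diagonal_diagEntries]
  simpa [Function.comp_def] using
    (isUnitarilyDiagonal_diagonal fun i => lam i.rev).comp_equiv Fin.revPerm

noncomputable def padZero (p q : ℕ) : (Fin p → ℂ) →ₗ[ℂ] (Fin (p + q) → ℂ) where
  toFun y := Fin.append y 0
  map_add' x y := by ext i; refine Fin.addCases (fun i => ?_) (fun i => ?_) i <;> simp
  map_smul' c y := by ext i; refine Fin.addCases (fun i => ?_) (fun i => ?_) i <;> simp

lemma padZero_injective : Function.Injective (padZero p q) := fun x y h => by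
  funext i
  simpa [padZero] using congrFun h (Fin.castAdd q i)

lemma pairing_eq_star_dotProduct (z w : Fin (p + q) → ℂ) :
    pairing p q z w = star w ⬝ᵥ (Jmat p q *ᵥ z) := by
  simp only [pairing, Jmat, dotProduct, mulVec_diagonal, Pi.star_apply]
  refine Finset.sum_congr rfl fun i _ => ?_
  split_ifs <;> simp [mul_comm]

lemma IsJUnitary.pairing_mulVec {S : Matrix (Fin (p + q)) (Fin (p + q)) ℂ}
    (hS : IsJUnitary p q S) (z w : Fin (p + q) → ℂ) :
    pairing p q (S *ᵥ z) (S *ᵥ w) = pairing p q z w := by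
  rw [pairing_eq_star_dotProduct, pairing_eq_star_dotProduct, star_mulVec, mulVec_mulVec,
    dotProduct_mulVec, vecMul_vecMul, ← dotProduct_mulVec, ← Matrix.mul_assoc,
    hS.conjTranspose_mul_Jmat_mul]

lemma pairing_padZero (X : Matrix (Fin (p + q)) (Fin (p + q)) ℂ) (y : Fin p → ℂ) :
    pairing p q (X *ᵥ padZero p q y) (padZero p q y) = star y ⬝ᵥ (topLeft X *ᵥ y) := by
  simp [pairing, padZero, Fin.sum_univ_add, dotProduct, mulVec, topLeft, mul_comm]

lemma pairing_padZero_self (y : Fin p → ℂ) :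
    pairing p q (padZero p q y) (padZero p q y) = sqNorm y := by
  simpa [topLeft, submatrix_one _ (Fin.castAdd_injective p q), star_dotProduct_self] using
    pairing_padZero (q := q) 1 y

lemma lam_mul_re_pairing_le {hp : 0 < p} {hq : 0 < q} {lam : Fin p → ℝ} {mu : Fin q → ℝ}
    (hlam : Monotone lam) (hmu : Antitone mu) (hgap : mu ⟨0, hq⟩ < lam ⟨0, hp⟩) (j : Fin p)
    {c : Fin (p + q) → ℂ} (hc : ∀ i : Fin (p + q), c i ≠ 0 → (i : ℕ) < p - j ∨ p ≤ i) :
    lam j * (pairing p q c c).re ≤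
      (pairing p q (diagonal (diagEntries p q lam mu) *ᵥ c) c).re := by
  simp only [pairing, mulVec_diagonal, Complex.re_sum, Finset.mul_sum]
  refine Finset.sum_le_sum fun i _ => ?_
  by_cases h0 : c i = 0
  · simp [h0]
  have hns := Complex.normSq_nonneg (c i)
  simp only [mul_assoc, Complex.mul_conj, diagEntries]
  split_ifs with hip <;> simp only [← Complex.ofReal_mul, Complex.ofReal_re, Complex.neg_re]
  · have hi := hc i h0
    have hle : lam j ≤ lam ⟨p - 1 - i, by omega⟩ :=
      hlam (Fin.le_def.2 (show (j : ℕ) ≤ p - 1 - i by omega))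
    nlinarith
  · have hle : mu ⟨i - p, by omega⟩ ≤ lam j :=
      calc mu ⟨i - p, by omega⟩ ≤ mu ⟨0, hq⟩ := hmu (Fin.le_def.2 (Nat.zero_le _))
        _ ≤ lam ⟨0, hp⟩ := hgap.le
        _ ≤ lam j := hlam (Fin.le_def.2 (Nat.zero_le _))
    nlinarith

theorem IsAdmissible.le_of_isUnitarilyDiagonal_topLeft {hp : 0 < p} {hq : 0 < q}
    {X : Matrix (Fin (p + q)) (Fin (p + q)) ℂ} {lam : Fin p → ℝ} {mu : Fin q → ℝ}
    (hX : IsAdmissible p q hp hq X lam mu) {d : Fin p → ℝ} (hd : Monotone d)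
    (hXd : IsUnitarilyDiagonal (topLeft X) d) (j : Fin p) : lam j ≤ d j := by
  obtain ⟨-, hlam, hmu, hgap, S, -, hS : IsJUnitary p q S, rfl⟩ := hX
  -- the coordinates outside `[p - j, p)` carry `lam j, …, lam (p - 1)` and all of `mu`
  set W := (coordSubspace (Finset.Ico (⟨p - j, by omega⟩ : Fin (p + q)) ⟨p, by omega⟩)ᶜ).map
    S.mulVecLin
  have hV : p - j ≤ finrank ℂ (W.comap (padZero p q)) := by
    have h := finrank_add_finrank_le_finrank_comap padZero_injective W
    rw [finrank_map_mulVecLin hS.isUnit, finrank_coordSubspace, Finset.card_compl,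
      Fin.card_Ico] at h
    simp only [finrank_fin_fun, Fintype.card_fin] at h
    omega
  refine hXd.le_of_forall_mem hd hV fun y ⟨c, hc, hcy⟩ => ?_
  simp only [SetLike.mem_coe, mulVecLin_apply] at hc hcy
  have hXS : (S * diagonal (diagEntries p q lam mu) * S⁻¹) *ᵥ (S *ᵥ c) =
      S *ᵥ (diagonal (diagEntries p q lam mu) *ᵥ c) := by
    rw [mulVec_mulVec, Matrix.mul_assoc _ S⁻¹, hS.inv_mul, Matrix.mul_one, mulVec_mulVec]
  rw [quadForm, ← pairing_padZero, ← hcy, hXS, hS.pairing_mulVec,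
    ← Complex.ofReal_re (sqNorm y), ← pairing_padZero_self, ← hcy, hS.pairing_mulVec]
  refine lam_mul_re_pairing_le hlam hmu hgap j fun i hi => ?_
  have := mem_coordSubspace.mp hc i hi
  simp only [Finset.mem_compl, Finset.mem_Ico, Fin.le_def, Fin.lt_def] at this
  omega

end PseudoHermitian

end LidskiiWielandt

open LidskiiWielandt

/-- Lidskii–Wielandt analogue for λ's: if `A`, `B`, `C = A + B` are
admissible and `1 ≤ i_1 < ⋯ < i_m ≤ p` (encoded by a strictly monotone
`idx : Fin m → Fin p`, 0-indexed), then
`Σ_k λ_{i_k}(C) ≥ Σ_k λ_{i_k}(A) + Σ_{k=1}^m λ_k(B)`. -/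
theorem lidskii_wielandt_lambda
    (p q : ℕ) (hp : 0 < p) (hq : 0 < q)
    (A B : Matrix (Fin (p + q)) (Fin (p + q)) ℂ)
    (lamA : Fin p → ℝ) (muA : Fin q → ℝ)
    (lamB : Fin p → ℝ) (muB : Fin q → ℝ)
    (lamC : Fin p → ℝ) (muC : Fin q → ℝ)
    (hA : IsAdmissible p q hp hq A lamA muA)
    (hB : IsAdmissible p q hp hq B lamB muB)
    (hC : IsAdmissible p q hp hq (A + B) lamC muC)
    (m : ℕ) (hm : m ≤ p) (idx : Fin m → Fin p) (hidx : StrictMono idx) :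
    ∑ k : Fin m, lamA (idx k) + ∑ k : Fin m, lamB (Fin.castLE hm k) ≤
      ∑ k : Fin m, lamC (idx k) := by
  obtain ⟨-, hlamC, -, -, U, -, hU : IsJUnitary p q U, hABU⟩ := hC
  have hA' := hA.conj hU
  have hB' := hB.conj hU
  have hsum : topLeft (U⁻¹ * A * U) + topLeft (U⁻¹ * B * U) =
      topLeft (diagonal (diagEntries p q lamC muC)) := by
    have h : U⁻¹ * A * U + U⁻¹ * B * U = diagonal (diagEntries p q lamC muC) := by
      rw [← Matrix.add_mul, ← Matrix.mul_add, hABU]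
      simp only [← Matrix.mul_assoc, hU.inv_mul, Matrix.one_mul]
      rw [Matrix.mul_assoc, hU.inv_mul, Matrix.mul_one]
    rw [← h]
    rfl
  obtain ⟨a, ha, hAa⟩ := exists_monotone_isUnitarilyDiagonal (isHermitian_topLeft hA'.1)
  obtain ⟨b, hb, hBb⟩ := exists_monotone_isUnitarilyDiagonal (isHermitian_topLeft hB'.1)
  have hC' := isUnitarilyDiagonal_topLeft_diagonal lamC muC
  rw [← hsum] at hC'
  have hlid := lidskii_wielandt_hermitian hAa ha hBb hb hC' hlamC hm hidx
  have hAle : ∑ k, lamA (idx k) ≤ ∑ k, a (idx k) :=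
    Finset.sum_le_sum fun k _ => hA'.le_of_isUnitarilyDiagonal_topLeft ha hAa _
  have hBle : ∑ k, lamB (Fin.castLE hm k) ≤ ∑ k, b (Fin.castLE hm k) :=
    Finset.sum_le_sum fun k _ => hB'.le_of_isUnitarilyDiagonal_topLeft hb hBb _
  linarith
end
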